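/- Let R be a fusion ring with basis B, fusion subsets S and T, and double-coset classes Λ₁,…,Λ_l with A_i = Σ_{X∈Λ_i}FPdim(X)·X. Then for any X ∈ Λ_i one has R_S·X·R_T = (FPdim(S)·FPdim(X)·FPdim(T)/FPdim(A_i))·A_i in R ⊗ ℝ. -/
import Mathlib


open Finset

/-- A fusion ring with distinguished basis indexed by `ι`: nonnegative integer structure
constants `N`, unit basis element `one`, involution `star`, and the Frobenius–Perron
dimension `fp`, the (unique) ring homomorphism to `ℝ` positive on the basis. -/
structure FusionRing (ι : Type) [Fintype ι] [DecidableEq ι] where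
  N : ι → ι → ι → ℕ
  one : ι
  star : ι → ι
  assoc : ∀ a b c d, ∑ x, N a b x * N x c d = ∑ x, N b c x * N a x d
  one_mul : ∀ a b, N one a b = if a = b then 1 else 0
  mul_one : ∀ a b, N a one b = if a = b then 1 else 0
  star_invol : ∀ a, star (star a) = a
  N_one : ∀ a b, N a b one = if b = star a then 1 else 0
  N_star : ∀ a b c, N a b c = N (star b) (star a) (star c)
  fp : ι → ℝ
  fp_pos : ∀ a, 0 < fp a
  fp_one : fp one = 1
  fp_hom : ∀ a b, fp a * fp b = ∑ c, (N a b c : ℝ) * fp c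

namespace FusionRing

variable {ι : Type} [Fintype ι] [DecidableEq ι] (R : FusionRing ι)

set_option linter.unusedVariables false
open scoped Classical

/-- Multiplication of `R ⊗ ℝ`, written on coefficient vectors in the basis `ι`. -/
noncomputable def mul (x y : ι → ℝ) : ι → ℝ :=
  fun c => ∑ a, ∑ b, x a * y b * (R.N a b c : ℝ)

/-- The basis element `a` viewed as a coefficient vector. -/
def e (R : FusionRing ι) (a : ι) : ι → ℝ := fun c => if c = a then 1 else 0

/-- The linear extension of the involution `*`. -/
def starVec (x : ι → ℝ) : ι → ℝ := fun c => x (R.star c)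

/-- The standard bilinear form, `m(a,b) = δ_{a,b}` on basis elements. -/
def m (R : FusionRing ι) (x y : ι → ℝ) : ℝ := ∑ a, x a * y a

/-- `S` is the basis of a fusion subring: contains the unit, closed under `*`, and closed
under taking constituents of products. -/
def IsFusionSubset (S : Finset ι) : Prop :=
  R.one ∈ S ∧ (∀ a ∈ S, R.star a ∈ S) ∧ ∀ a ∈ S, ∀ b ∈ S, ∀ c, 0 < R.N a b c → c ∈ S

/-- The regular element `R_S = ∑_{d ∈ S} FPdim(d)·d` of a fusion subset `S`. -/
def reg (S : Finset ι) : ι → ℝ := fun c => if c ∈ S then R.fp c else 0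

/-- `FPdim(S) = ∑_{d ∈ S} FPdim(d)²`. -/
def fpdimS (S : Finset ι) : ℝ := ∑ d ∈ S, R.fp d ^ 2

/-- The double coset relation relative to fusion subsets `S`, `T`:
`X ∼ Y` iff `Y` occurs with positive multiplicity in `D·X·E` for some `D ∈ S`, `E ∈ T`. -/
def dcRel (S T : Finset ι) (X Y : ι) : Prop :=
  ∃ D ∈ S, ∃ E ∈ T, 0 < ∑ a, R.N D X a * R.N a E Y

/-- `A_i = ∑_{Y ∈ Λ_i} FPdim(Y)·Y` where `Λ_i` is the double coset of `X`. -/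
noncomputable def classVec (S T : Finset ι) (X : ι) : ι → ℝ :=
  fun c => if R.dcRel S T X c then R.fp c else 0

end FusionRing

namespace FusionRing

variable {ι : Type} [Fintype ι] [DecidableEq ι] (R : FusionRing ι)

open scoped Classical

lemma key (a b c : ι) : R.N a b (R.star c) = R.N b c (R.star a) := by
  have h := R.assoc a b c R.one
  have e1 : ∀ x, R.N x c R.one = if x = R.star c then 1 else 0 := by
    intro x; rw [R.N_one]
    by_cases hx : x = R.star c
    · have : c = R.star x := by rw [hx, R.star_invol]
      rw [if_pos this, if_pos hx]
    · have : ¬ c = R.star x := fun hc => hx (by rw [hc, R.star_invol])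
      rw [if_neg this, if_neg hx]
  simp only [e1, R.N_one, mul_ite, mul_one, mul_zero, Finset.sum_ite_eq',
    Finset.mem_univ, if_true] at h
  simpa using h

lemma cyc (a b c : ι) : R.N a b c = R.N b (R.star c) (R.star a) := by
  have := R.key a b (R.star c)
  rwa [R.star_invol] at this

lemma frob1 (a b c : ι) : R.N a b c = R.N c (R.star b) a := by
  rw [R.cyc a b c, R.N_star, R.star_invol, R.star_invol]

lemma cyc2 (a b c : ι) : R.N a b c = R.N (R.star c) a (R.star b) := by
  rw [R.cyc a b c, R.cyc, R.star_invol]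

lemma frob2 (a b c : ι) : R.N a b c = R.N (R.star a) c b := by
  rw [R.cyc2 a b c, R.N_star, R.star_invol, R.star_invol]

lemma sum_star (f : ι → ℝ) : ∑ c, f (R.star c) = ∑ c, f c :=
  Fintype.sum_equiv (Function.Involutive.toPerm R.star R.star_invol) _ _ fun c => rfl

lemma g_antihom (a b : ι) :
    R.fp (R.star a) * R.fp (R.star b) = ∑ c, (R.N b a c : ℝ) * R.fp (R.star c) := by
  rw [R.fp_hom]
  rw [← R.sum_star (fun c => (R.N (R.star a) (R.star b) c : ℝ) * R.fp c)]
  refine Finset.sum_congr rfl fun c _ => ?_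
  rw [← R.N_star]

lemma sum_fp_snd (a c : ι) : ∑ b, (R.N a b c : ℝ) * R.fp b = R.fp (R.star a) * R.fp c := by
  calc ∑ b, (R.N a b c : ℝ) * R.fp b
      = ∑ b, (R.N (R.star c) a (R.star b) : ℝ) * R.fp b := by
        refine Finset.sum_congr rfl fun b _ => ?_; rw [← R.cyc2]
    _ = ∑ b, (R.N (R.star c) a b : ℝ) * R.fp (R.star b) := by
        rw [← R.sum_star (fun b => (R.N (R.star c) a b : ℝ) * R.fp (R.star b))]
        refine Finset.sum_congr rfl fun b _ => ?_
        rw [R.star_invol]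
    _ = R.fp (R.star a) * R.fp (R.star (R.star c)) := (R.g_antihom a (R.star c)).symm
    _ = R.fp (R.star a) * R.fp c := by rw [R.star_invol]

lemma sum_sq_pos : 0 < ∑ c, R.fp c * R.fp c := by
  apply Finset.sum_pos' (fun c _ => mul_nonneg (R.fp_pos c).le (R.fp_pos c).le)
  exact ⟨R.one, Finset.mem_univ _, mul_pos (R.fp_pos _) (R.fp_pos _)⟩

lemma fp_star (a : ι) : R.fp (R.star a) = R.fp a := by
  have key : R.fp (R.star a) * (∑ c, R.fp c * R.fp c)
      = R.fp a * (∑ c, R.fp c * R.fp c) := by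
    calc R.fp (R.star a) * ∑ c, R.fp c * R.fp c
        = ∑ c, (∑ b, (R.N a b c : ℝ) * R.fp b) * R.fp c := by
          rw [Finset.mul_sum]
          refine Finset.sum_congr rfl fun c _ => ?_
          rw [R.sum_fp_snd]; ring
      _ = ∑ b, (∑ c, (R.N a b c : ℝ) * R.fp c) * R.fp b := by
          simp only [Finset.sum_mul]
          rw [Finset.sum_comm]
          exact Finset.sum_congr rfl fun b _ => Finset.sum_congr rfl fun c _ => by ring
      _ = ∑ b, (R.fp a * R.fp b) * R.fp b := by
          refine Finset.sum_congr rfl fun b _ => ?_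
          rw [← R.fp_hom]
      _ = R.fp a * ∑ c, R.fp c * R.fp c := by
          rw [Finset.mul_sum]
          exact Finset.sum_congr rfl fun c _ => by ring
  exact mul_right_cancel₀ (ne_of_gt R.sum_sq_pos) key

end FusionRing

namespace FusionRing

variable {ι : Type} [Fintype ι] [DecidableEq ι] (R : FusionRing ι)

open scoped Classical

lemma reg_nonneg (S : Finset ι) (c : ι) : 0 ≤ R.reg S c := by
  unfold reg; split
  · exact (R.fp_pos c).le
  · exact le_refl 0

lemma reg_mem (S : Finset ι) {c : ι} (h : c ∈ S) : R.reg S c = R.fp c := if_pos h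

lemma reg_notMem (S : Finset ι) {c : ι} (h : c ∉ S) : R.reg S c = 0 := if_neg h

lemma reg_star (S : Finset ι) (hS : R.IsFusionSubset S) (c : ι) :
    R.reg S (R.star c) = R.reg S c := by
  have hmem : R.star c ∈ S ↔ c ∈ S :=
    ⟨fun h => by have := hS.2.1 _ h; rwa [R.star_invol] at this, hS.2.1 c⟩
  unfold reg
  by_cases h : c ∈ S
  · rw [if_pos (hmem.mpr h), if_pos h, R.fp_star]
  · rw [if_neg (fun hc => h (hmem.mp hc)), if_neg h]

lemma fpdimS_pos (S : Finset ι) (h : R.one ∈ S) : 0 < R.fpdimS S :=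
  Finset.sum_pos' (fun d _ => sq_nonneg _) ⟨R.one, h, pow_pos (R.fp_pos _) 2⟩

lemma sum_rot (f : ι → ι → ι → ℝ) :
    ∑ a : ι, ∑ b : ι, ∑ c : ι, f a b c = ∑ c : ι, ∑ b : ι, ∑ a : ι, f a b c :=
  calc ∑ a : ι, ∑ b : ι, ∑ c : ι, f a b c
      = ∑ a : ι, ∑ c : ι, ∑ b : ι, f a b c :=
        Finset.sum_congr rfl fun a _ => Finset.sum_comm
    _ = ∑ c : ι, ∑ a : ι, ∑ b : ι, f a b c := Finset.sum_comm
    _ = ∑ c : ι, ∑ b : ι, ∑ a : ι, f a b c :=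
        Finset.sum_congr rfl fun c _ => Finset.sum_comm

lemma mul_e_apply (x : ι → ℝ) (Y c : ι) :
    R.mul x (R.e Y) c = ∑ a, x a * (R.N a Y c : ℝ) := by
  unfold mul e
  refine Finset.sum_congr rfl fun a _ => ?_
  rw [Finset.sum_eq_single Y (fun b _ hb => by simp [hb])
    (fun h => absurd (Finset.mem_univ Y) h)]
  simp

/-- `uvec Y = R_S · Y · R_T`. -/
noncomputable def uvec (S T : Finset ι) (Y : ι) : ι → ℝ :=
  R.mul (R.mul (R.reg S) (R.e Y)) (R.reg T)

lemma uvec_apply (S T : Finset ι) (Y Z : ι) :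
    R.uvec S T Y Z
      = ∑ D, ∑ E, R.reg S D * R.reg T E * ∑ a, (R.N D Y a : ℝ) * (R.N a E Z : ℝ) := by
  show ∑ a, ∑ b, R.mul (R.reg S) (R.e Y) a * R.reg T b * (R.N a b Z : ℝ) = _
  simp only [R.mul_e_apply, Finset.sum_mul]
  refine (sum_rot _).trans ?_
  refine Finset.sum_congr rfl fun D _ => Finset.sum_congr rfl fun E _ => ?_
  rw [Finset.mul_sum]
  exact Finset.sum_congr rfl fun a _ => by ring

lemma uvec_nonneg (S T : Finset ι) (Y Z : ι) : 0 ≤ R.uvec S T Y Z := by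
  rw [R.uvec_apply]
  refine Finset.sum_nonneg fun D _ => Finset.sum_nonneg fun E _ => ?_
  refine mul_nonneg (mul_nonneg (R.reg_nonneg S D) (R.reg_nonneg T E)) ?_
  exact Finset.sum_nonneg fun a _ => mul_nonneg (Nat.cast_nonneg _) (Nat.cast_nonneg _)

lemma uvec_pos_iff (S T : Finset ι) (Y Z : ι) :
    0 < R.uvec S T Y Z ↔ R.dcRel S T Y Z := by
  rw [R.uvec_apply]
  constructor
  · intro hpos
    by_contra hnc
    refine absurd hpos (not_lt.mpr (le_of_eq ?_))
    refine Finset.sum_eq_zero fun D _ => Finset.sum_eq_zero fun E _ => ?_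
    by_cases hD : D ∈ S
    · by_cases hE : E ∈ T
      · have hz : ∑ a, R.N D Y a * R.N a E Z = 0 := by
          by_contra hnz
          exact hnc ⟨D, hD, E, hE, Nat.pos_of_ne_zero hnz⟩
        have : ∑ a, (R.N D Y a : ℝ) * (R.N a E Z : ℝ) = 0 := by
          exact_mod_cast congrArg (Nat.cast (R := ℝ)) hz
        rw [this, mul_zero]
      · rw [R.reg_notMem T hE, mul_zero, zero_mul]
    · rw [R.reg_notMem S hD, zero_mul, zero_mul]
  · rintro ⟨D, hD, E, hE, hpos⟩
    have hterm : ∀ D' E', (0:ℝ) ≤ R.reg S D' * R.reg T E' *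
        ∑ a, (R.N D' Y a : ℝ) * (R.N a E' Z : ℝ) := fun D' E' =>
      mul_nonneg (mul_nonneg (R.reg_nonneg S D') (R.reg_nonneg T E'))
        (Finset.sum_nonneg fun a _ => mul_nonneg (Nat.cast_nonneg _) (Nat.cast_nonneg _))
    have hin : (0:ℝ) < ∑ a, (R.N D Y a : ℝ) * (R.N a E Z : ℝ) := by
      have : (0:ℝ) < ((∑ a, R.N D Y a * R.N a E Z : ℕ) : ℝ) := by exact_mod_cast hpos
      simpa [Nat.cast_sum] using this
    have hDE : (0:ℝ) < R.reg S D * R.reg T E *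
        ∑ a, (R.N D Y a : ℝ) * (R.N a E Z : ℝ) := by
      have h1 : 0 < R.reg S D := by rw [R.reg_mem S hD]; exact R.fp_pos D
      have h2 : 0 < R.reg T E := by rw [R.reg_mem T hE]; exact R.fp_pos E
      exact mul_pos (mul_pos h1 h2) hin
    refine Finset.sum_pos' (fun D' _ => Finset.sum_nonneg fun E' _ => hterm D' E')
      ⟨D, Finset.mem_univ D, ?_⟩
    exact Finset.sum_pos' (fun E' _ => hterm D E') ⟨E, Finset.mem_univ E, hDE⟩

lemma inner_swap_nat (D E Y Z : ι) :
    ∑ a, R.N D Y a * R.N a E Z = ∑ a, R.N (R.star D) Z a * R.N a (R.star E) Y := by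
  rw [R.assoc D Y E Z]
  refine Finset.sum_congr rfl fun x _ => ?_
  rw [R.frob1 Y E x, R.frob2 D x Z]
  exact mul_comm _ _

lemma uvec_symm (S T : Finset ι) (hS : R.IsFusionSubset S) (hT : R.IsFusionSubset T)
    (Y Z : ι) : R.uvec S T Y Z = R.uvec S T Z Y := by
  rw [R.uvec_apply, R.uvec_apply]
  refine Fintype.sum_equiv (Function.Involutive.toPerm R.star R.star_invol) _ _ fun D => ?_
  refine Fintype.sum_equiv (Function.Involutive.toPerm R.star R.star_invol) _ _ fun E => ?_
  show R.reg S D * R.reg T E * ∑ a, (R.N D Y a : ℝ) * (R.N a E Z : ℝ)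
      = R.reg S (R.star D) * R.reg T (R.star E) *
        ∑ a, (R.N (R.star D) Z a : ℝ) * (R.N a (R.star E) Y : ℝ)
  rw [R.reg_star S hS, R.reg_star T hT]
  have h' : ∑ a, (R.N D Y a : ℝ) * (R.N a E Z : ℝ)
      = ∑ a, (R.N (R.star D) Z a : ℝ) * (R.N a (R.star E) Y : ℝ) := by
    exact_mod_cast R.inner_swap_nat D E Y Z
  rw [h']

end FusionRing

namespace FusionRing

variable {ι : Type} [Fintype ι] [DecidableEq ι] (R : FusionRing ι)

open scoped Classical

lemma sum_inn3 (f : ι → ι → ι → ℝ) :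
    ∑ p : ι, ∑ a : ι, ∑ d : ι, f p a d = ∑ a : ι, ∑ d : ι, ∑ p : ι, f p a d := by
  rw [Finset.sum_comm]
  exact Finset.sum_congr rfl fun a _ => Finset.sum_comm

lemma sum_inn4 (f : ι → ι → ι → ι → ℝ) :
    ∑ p : ι, ∑ a : ι, ∑ d : ι, ∑ b : ι, f p a d b
      = ∑ a : ι, ∑ d : ι, ∑ b : ι, ∑ p : ι, f p a d b := by
  rw [Finset.sum_comm]
  exact Finset.sum_congr rfl fun a _ => sum_inn3 _

/-- The linear extension of `fp`. -/
noncomputable def phi (x : ι → ℝ) : ℝ := ∑ c, x c * R.fp c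

lemma phi_mul (x y : ι → ℝ) : R.phi (R.mul x y) = R.phi x * R.phi y := by
  unfold phi mul
  calc ∑ c, (∑ a, ∑ b, x a * y b * (R.N a b c : ℝ)) * R.fp c
      = ∑ c, ∑ a, ∑ b, x a * y b * ((R.N a b c : ℝ) * R.fp c) := by
        refine Finset.sum_congr rfl fun c _ => ?_
        rw [Finset.sum_mul]
        exact Finset.sum_congr rfl fun a _ => by
          rw [Finset.sum_mul]; exact Finset.sum_congr rfl fun b _ => by ring
    _ = ∑ a, ∑ b, ∑ c, x a * y b * ((R.N a b c : ℝ) * R.fp c) := sum_inn3 _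
    _ = ∑ a, ∑ b, x a * y b * (R.fp a * R.fp b) := by
        refine Finset.sum_congr rfl fun a _ => Finset.sum_congr rfl fun b _ => ?_
        rw [← Finset.mul_sum, ← R.fp_hom]
    _ = (∑ a, x a * R.fp a) * (∑ b, y b * R.fp b) := by
        rw [Finset.sum_mul_sum]
        exact Finset.sum_congr rfl fun a _ => Finset.sum_congr rfl fun b _ => by ring

lemma phi_reg (S : Finset ι) : R.phi (R.reg S) = R.fpdimS S := by
  unfold phi reg fpdimS
  simp only [ite_mul, zero_mul]
  rw [Finset.sum_ite_mem, Finset.univ_inter]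
  exact Finset.sum_congr rfl fun c _ => (pow_two _).symm

lemma phi_e (a : ι) : R.phi (R.e a) = R.fp a := by
  unfold phi e
  simp [ite_mul]

lemma mul_assoc' (x y z : ι → ℝ) : R.mul (R.mul x y) z = R.mul x (R.mul y z) := by
  funext c
  unfold mul
  have inner : ∀ a d b, ∑ p, (R.N a d p : ℝ) * (R.N p b c : ℝ)
      = ∑ p, (R.N d b p : ℝ) * (R.N a p c : ℝ) := fun a d b => by
    exact_mod_cast R.assoc a d b c
  calc ∑ p, ∑ b, (∑ a, ∑ d, x a * y d * (R.N a d p : ℝ)) * z b * (R.N p b c : ℝ)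
      = ∑ p, ∑ b, ∑ a, ∑ d,
          x a * y d * z b * ((R.N a d p : ℝ) * (R.N p b c : ℝ)) := by
        refine Finset.sum_congr rfl fun p _ => Finset.sum_congr rfl fun b _ => ?_
        rw [Finset.sum_mul, Finset.sum_mul]
        refine Finset.sum_congr rfl fun a _ => ?_
        rw [Finset.sum_mul, Finset.sum_mul]
        exact Finset.sum_congr rfl fun d _ => by ring
    _ = ∑ b, ∑ a, ∑ d, ∑ p,
          x a * y d * z b * ((R.N a d p : ℝ) * (R.N p b c : ℝ)) := sum_inn4 _
    _ = ∑ a, ∑ d, ∑ b, ∑ p,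
          x a * y d * z b * ((R.N a d p : ℝ) * (R.N p b c : ℝ)) := sum_inn3 _
    _ = ∑ a, ∑ d, ∑ b,
          x a * y d * z b * ∑ p, (R.N d b p : ℝ) * (R.N a p c : ℝ) := by
        refine Finset.sum_congr rfl fun a _ => Finset.sum_congr rfl fun d _ =>
          Finset.sum_congr rfl fun b _ => ?_
        rw [← Finset.mul_sum, inner]
    _ = ∑ a, ∑ d, ∑ b, ∑ p,
          x a * y d * z b * ((R.N d b p : ℝ) * (R.N a p c : ℝ)) := by
        refine Finset.sum_congr rfl fun a _ => Finset.sum_congr rfl fun d _ =>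
          Finset.sum_congr rfl fun b _ => ?_
        rw [Finset.mul_sum]
    _ = ∑ a, ∑ p, ∑ d, ∑ b,
          x a * y d * z b * ((R.N d b p : ℝ) * (R.N a p c : ℝ)) := by
        refine Finset.sum_congr rfl fun a _ => ?_
        exact (sum_inn3 fun p d b =>
          x a * y d * z b * ((R.N d b p : ℝ) * (R.N a p c : ℝ))).symm
    _ = ∑ a, ∑ p, x a * (∑ d, ∑ b, y d * z b * (R.N d b p : ℝ)) * (R.N a p c : ℝ) := by
        refine Finset.sum_congr rfl fun a _ => Finset.sum_congr rfl fun p _ => ?_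
        rw [Finset.mul_sum, Finset.sum_mul]
        refine Finset.sum_congr rfl fun d _ => ?_
        rw [Finset.mul_sum, Finset.sum_mul]
        exact Finset.sum_congr rfl fun b _ => by ring

lemma mul_smul_left (c : ℝ) (x y : ι → ℝ) : R.mul (c • x) y = c • R.mul x y := by
  funext z
  unfold mul
  simp only [Pi.smul_apply, smul_eq_mul, Finset.mul_sum]
  exact Finset.sum_congr rfl fun a _ => Finset.sum_congr rfl fun b _ => by ring

lemma mul_smul_right (c : ℝ) (x y : ι → ℝ) : R.mul x (c • y) = c • R.mul x y := by
  funext z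
  unfold mul
  simp only [Pi.smul_apply, smul_eq_mul, Finset.mul_sum]
  exact Finset.sum_congr rfl fun a _ => Finset.sum_congr rfl fun b _ => by ring

lemma reg_mul_reg (S : Finset ι) (hS : R.IsFusionSubset S) :
    R.mul (R.reg S) (R.reg S) = R.fpdimS S • R.reg S := by
  funext c
  show ∑ a, ∑ b, R.reg S a * R.reg S b * (R.N a b c : ℝ) = _
  by_cases hc : c ∈ S
  · have hbext : ∀ a ∈ S, ∑ b, R.reg S b * (R.N a b c : ℝ) = R.fp a * R.fp c := by
      intro a ha
      have : ∀ b, R.reg S b * (R.N a b c : ℝ) = (R.N a b c : ℝ) * R.fp b := by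
        intro b
        by_cases hb : b ∈ S
        · rw [R.reg_mem S hb]; ring
        · have hz : R.N a b c = 0 := by
            by_contra hnz
            refine hb (hS.2.2 (R.star a) (hS.2.1 a ha) c hc b ?_)
            rw [← R.frob2]
            exact Nat.pos_of_ne_zero hnz
          rw [R.reg_notMem S hb, hz]; simp
      calc ∑ b, R.reg S b * (R.N a b c : ℝ) = ∑ b, (R.N a b c : ℝ) * R.fp b :=
            Finset.sum_congr rfl fun b _ => this b
        _ = R.fp (R.star a) * R.fp c := R.sum_fp_snd a c
        _ = R.fp a * R.fp c := by rw [R.fp_star]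
    calc ∑ a, ∑ b, R.reg S a * R.reg S b * (R.N a b c : ℝ)
        = ∑ a, R.reg S a * ∑ b, R.reg S b * (R.N a b c : ℝ) := by
          refine Finset.sum_congr rfl fun a _ => ?_
          rw [Finset.mul_sum]
          exact Finset.sum_congr rfl fun b _ => by ring
      _ = ∑ a, R.reg S a * (R.fp a * R.fp c) := by
          refine Finset.sum_congr rfl fun a _ => ?_
          by_cases ha : a ∈ S
          · rw [hbext a ha]
          · rw [R.reg_notMem S ha, zero_mul, zero_mul]
      _ = (∑ a, R.reg S a * R.fp a) * R.fp c := by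
          rw [Finset.sum_mul]
          exact Finset.sum_congr rfl fun a _ => by ring
      _ = R.fpdimS S • R.reg S c := by
          rw [← R.phi_reg S]
          unfold phi
          rw [R.reg_mem S hc]
          simp [smul_eq_mul]
  · rw [Pi.smul_apply, R.reg_notMem S hc, smul_eq_mul, mul_zero]
    refine Finset.sum_eq_zero fun a _ => Finset.sum_eq_zero fun b _ => ?_
    by_cases ha : a ∈ S
    · by_cases hb : b ∈ S
      · have hz : R.N a b c = 0 := by
          by_contra hnz
          exact hc (hS.2.2 a ha b hb c (Nat.pos_of_ne_zero hnz))
        rw [hz]; simp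
      · rw [R.reg_notMem S hb, mul_zero, zero_mul]
    · rw [R.reg_notMem S ha, zero_mul, zero_mul]

end FusionRing

namespace FusionRing

variable {ι : Type} [Fintype ι] [DecidableEq ι] (R : FusionRing ι)

open scoped Classical

/-- The operator `w ↦ R_S · w · R_T`, written in matrix form. -/
noncomputable def Mop (S T : Finset ι) (w : ι → ℝ) : ι → ℝ :=
  fun Z => ∑ Y, w Y * R.uvec S T Y Z

lemma Mop_eq (S T : Finset ι) (w : ι → ℝ) :
    R.Mop S T w = R.mul (R.mul (R.reg S) w) (R.reg T) := by
  funext Z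
  show _ = ∑ p, ∑ E, (∑ D, ∑ Y, R.reg S D * w Y * (R.N D Y p : ℝ)) * R.reg T E
      * (R.N p E Z : ℝ)
  symm
  calc ∑ p, ∑ E, (∑ D, ∑ Y, R.reg S D * w Y * (R.N D Y p : ℝ)) * R.reg T E
          * (R.N p E Z : ℝ)
      = ∑ p, ∑ E, ∑ D, ∑ Y, R.reg S D * w Y * (R.N D Y p : ℝ) * R.reg T E
          * (R.N p E Z : ℝ) := by
        refine Finset.sum_congr rfl fun p _ => Finset.sum_congr rfl fun E _ => ?_
        rw [Finset.sum_mul, Finset.sum_mul]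
        refine Finset.sum_congr rfl fun D _ => ?_
        rw [Finset.sum_mul, Finset.sum_mul]
    _ = ∑ E, ∑ D, ∑ Y, ∑ p, R.reg S D * w Y * (R.N D Y p : ℝ) * R.reg T E
          * (R.N p E Z : ℝ) := sum_inn4 _
    _ = ∑ D, ∑ Y, ∑ E, ∑ p, R.reg S D * w Y * (R.N D Y p : ℝ) * R.reg T E
          * (R.N p E Z : ℝ) := sum_inn3 _
    _ = ∑ Y, ∑ D, ∑ E, ∑ p, R.reg S D * w Y * (R.N D Y p : ℝ) * R.reg T E
          * (R.N p E Z : ℝ) := Finset.sum_comm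
    _ = ∑ Y, w Y * R.uvec S T Y Z := by
        refine Finset.sum_congr rfl fun Y _ => ?_
        rw [R.uvec_apply, Finset.mul_sum]
        refine Finset.sum_congr rfl fun D _ => ?_
        rw [Finset.mul_sum]
        refine Finset.sum_congr rfl fun E _ => ?_
        rw [Finset.mul_sum, Finset.mul_sum]
        exact Finset.sum_congr rfl fun p _ => by ring

lemma Mop_uvec (S T : Finset ι) (hS : R.IsFusionSubset S) (hT : R.IsFusionSubset T)
    (X : ι) : R.Mop S T (R.uvec S T X)
      = (R.fpdimS S * R.fpdimS T) • R.uvec S T X := by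
  rw [R.Mop_eq]
  show R.mul (R.mul (R.reg S) (R.mul (R.mul (R.reg S) (R.e X)) (R.reg T))) (R.reg T) = _
  rw [← R.mul_assoc' (R.reg S) (R.mul (R.reg S) (R.e X)) (R.reg T),
    ← R.mul_assoc' (R.reg S) (R.reg S) (R.e X),
    R.mul_assoc' (R.mul (R.mul (R.reg S) (R.reg S)) (R.e X)) (R.reg T) (R.reg T),
    R.reg_mul_reg S hS, R.reg_mul_reg T hT, R.mul_smul_left, R.mul_smul_right,
    R.mul_smul_left, smul_smul, mul_comm (R.fpdimS T) (R.fpdimS S)]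
  rfl

lemma uvec_eq_zero (S T : Finset ι) {Y Z : ι} (h : ¬ R.dcRel S T Y Z) :
    R.uvec S T Y Z = 0 :=
  ((R.uvec_nonneg S T Y Z).lt_or_eq.resolve_left
    (fun hlt => h ((R.uvec_pos_iff S T Y Z).mp hlt))).symm

lemma dc_refl (S T : Finset ι) (hS : R.IsFusionSubset S) (hT : R.IsFusionSubset T)
    (X : ι) : R.dcRel S T X X := by
  refine ⟨R.one, hS.1, R.one, hT.1, ?_⟩
  refine Finset.sum_pos' (fun a _ => Nat.zero_le _) ⟨X, Finset.mem_univ X, ?_⟩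
  rw [R.one_mul, R.mul_one]
  simp

lemma dc_symm (S T : Finset ι) (hS : R.IsFusionSubset S) (hT : R.IsFusionSubset T)
    {Y Z : ι} (h : R.dcRel S T Y Z) : R.dcRel S T Z Y := by
  rw [← R.uvec_pos_iff, R.uvec_symm S T hS hT Z Y, R.uvec_pos_iff]
  exact h

lemma dc_trans (S T : Finset ι) (hS : R.IsFusionSubset S) (hT : R.IsFusionSubset T)
    {X Y Z : ι} (hXY : R.dcRel S T X Y) (hYZ : R.dcRel S T Y Z) : R.dcRel S T X Z := by
  rw [← R.uvec_pos_iff]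
  have heig := congrFun (R.Mop_uvec S T hS hT X) Z
  have heig' : ∑ W, R.uvec S T X W * R.uvec S T W Z
      = (R.fpdimS S * R.fpdimS T) * R.uvec S T X Z := by
    simpa [Mop, Pi.smul_apply, smul_eq_mul] using heig
  have hge : R.uvec S T X Y * R.uvec S T Y Z ≤ ∑ W, R.uvec S T X W * R.uvec S T W Z :=
    Finset.single_le_sum
      (fun W _ => mul_nonneg (R.uvec_nonneg S T X W) (R.uvec_nonneg S T W Z))
      (Finset.mem_univ Y)
  have hpos : 0 < (R.fpdimS S * R.fpdimS T) * R.uvec S T X Z := by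
    rw [← heig']
    exact lt_of_lt_of_le
      (mul_pos ((R.uvec_pos_iff S T X Y).mpr hXY) ((R.uvec_pos_iff S T Y Z).mpr hYZ)) hge
  rcases (R.uvec_nonneg S T X Z).lt_or_eq with h | h
  · exact h
  · rw [← h, mul_zero] at hpos
    exact absurd hpos (lt_irrefl 0)

lemma phi_uvec (S T : Finset ι) (Y : ι) :
    R.phi (R.uvec S T Y) = R.fpdimS S * R.fp Y * R.fpdimS T := by
  unfold uvec
  rw [R.phi_mul, R.phi_mul, R.phi_reg, R.phi_reg, R.phi_e]

end FusionRing

namespace FusionRing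

variable {ι : Type} [Fintype ι] [DecidableEq ι] (R : FusionRing ι)

open scoped Classical

lemma classVec_of (S T : Finset ι) (X Y : ι) (h : R.dcRel S T X Y) :
    R.classVec S T X Y = R.fp Y := by
  unfold classVec; rw [if_pos h]

lemma classVec_not (S T : Finset ι) (X Y : ι) (h : ¬ R.dcRel S T X Y) :
    R.classVec S T X Y = 0 := by
  unfold classVec; rw [if_neg h]

lemma Mop_classVec (S T : Finset ι) (hS : R.IsFusionSubset S) (hT : R.IsFusionSubset T)
    (X : ι) : R.Mop S T (R.classVec S T X)
      = (R.fpdimS S * R.fpdimS T) • R.classVec S T X := by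
  funext Z
  rw [Pi.smul_apply, smul_eq_mul]
  show ∑ Y, R.classVec S T X Y * R.uvec S T Y Z = _
  by_cases hZ : R.dcRel S T X Z
  · have step1 : ∀ Y, R.classVec S T X Y * R.uvec S T Y Z
        = R.uvec S T Z Y * R.fp Y := by
      intro Y
      rw [R.uvec_symm S T hS hT Y Z]
      by_cases hY : R.dcRel S T X Y
      · rw [R.classVec_of S T X Y hY]; ring
      · rw [R.classVec_not S T X Y hY, zero_mul,
          R.uvec_eq_zero S T (fun hZY => hY (R.dc_trans S T hS hT hZ hZY)), zero_mul]
    rw [Finset.sum_congr rfl fun Y _ => step1 Y]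
    have h2 : ∑ Y, R.uvec S T Z Y * R.fp Y = R.phi (R.uvec S T Z) := rfl
    rw [h2, R.phi_uvec, R.classVec_of S T X Z hZ]
    ring
  · rw [R.classVec_not S T X Z hZ, mul_zero]
    refine Finset.sum_eq_zero fun Y _ => ?_
    by_cases hY : R.dcRel S T X Y
    · rw [R.uvec_eq_zero S T (fun hYZ => hZ (R.dc_trans S T hS hT hY hYZ)), mul_zero]
    · rw [R.classVec_not S T X Y hY, zero_mul]

end FusionRing


/-- For any basis element `X` in the double coset `Λ_i` one has
`R_S·X·R_T = (FPdim(S)·FPdim(X)·FPdim(T)/FPdim(A_i))·A_i`, where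
`FPdim(A_i) = ∑_{Y ∈ Λ_i} FPdim(Y)²`. -/
theorem dc_product_formula {ι : Type} [Fintype ι] [DecidableEq ι] (R : FusionRing ι)
    (S T : Finset ι) (hS : R.IsFusionSubset S) (hT : R.IsFusionSubset T) (X : ι) :
    R.mul (R.mul (R.reg S) (R.e X)) (R.reg T) =
      (R.fpdimS S * R.fp X * R.fpdimS T / (∑ c, R.classVec S T X c * R.fp c)) •
        R.classVec S T X := by
    classical
  have hrefl : R.dcRel S T X X := R.dc_refl S T hS hT X
  obtain ⟨Y₀, hY₀mem, hY₀min⟩ := Finset.exists_min_image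
    (Finset.univ.filter (R.dcRel S T X))
    (fun Y => R.uvec S T X Y / R.classVec S T X Y)
    ⟨X, Finset.mem_filter.mpr ⟨Finset.mem_univ X, hrefl⟩⟩
  have hY₀ : R.dcRel S T X Y₀ := (Finset.mem_filter.mp hY₀mem).2
  set t : ℝ := R.uvec S T X Y₀ / R.classVec S T X Y₀ with htdef
  have hvpos : ∀ Y, R.dcRel S T X Y → 0 < R.classVec S T X Y := fun Y hY => by
    rw [R.classVec_of S T X Y hY]; exact R.fp_pos Y
  have hw_nonneg : ∀ Z, 0 ≤ R.uvec S T X Z - t * R.classVec S T X Z := by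
    intro Z
    by_cases hZ : R.dcRel S T X Z
    · have h1 : t ≤ R.uvec S T X Z / R.classVec S T X Z :=
        hY₀min Z (Finset.mem_filter.mpr ⟨Finset.mem_univ Z, hZ⟩)
      have h2 := (le_div_iff₀ (hvpos Z hZ)).mp h1
      linarith
    · rw [R.classVec_not S T X Z hZ, R.uvec_eq_zero S T hZ, mul_zero, sub_zero]
  have hwY₀ : R.uvec S T X Y₀ - t * R.classVec S T X Y₀ = 0 := by
    rw [htdef, div_mul_cancel₀ _ (ne_of_gt (hvpos Y₀ hY₀))]
    exact sub_self _
  have hMu := R.Mop_uvec S T hS hT X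
  have hMv := R.Mop_classVec S T hS hT X
  have hweig : ∀ Z, ∑ Y, (R.uvec S T X Y - t * R.classVec S T X Y) * R.uvec S T Y Z
      = (R.fpdimS S * R.fpdimS T) * (R.uvec S T X Z - t * R.classVec S T X Z) := by
    intro Z
    have h1 := congrFun hMu Z
    have h2 := congrFun hMv Z
    simp only [FusionRing.Mop, Pi.smul_apply, smul_eq_mul] at h1 h2
    calc ∑ Y, (R.uvec S T X Y - t * R.classVec S T X Y) * R.uvec S T Y Z
        = (∑ Y, R.uvec S T X Y * R.uvec S T Y Z)
          - t * ∑ Y, R.classVec S T X Y * R.uvec S T Y Z := by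
          rw [Finset.mul_sum, ← Finset.sum_sub_distrib]
          exact Finset.sum_congr rfl fun Y _ => by ring
      _ = (R.fpdimS S * R.fpdimS T) *
          (R.uvec S T X Z - t * R.classVec S T X Z) := by
          rw [h1, h2]; ring
  have hwzero : ∀ Z, R.uvec S T X Z - t * R.classVec S T X Z = 0 := by
    intro Z
    by_cases hZ : R.dcRel S T X Z
    · by_contra hne
      have hpos : 0 < R.uvec S T X Z - t * R.classVec S T X Z :=
        lt_of_le_of_ne (hw_nonneg Z) (Ne.symm hne)
      have hZY₀ : R.dcRel S T Z Y₀ :=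
        R.dc_trans S T hS hT (R.dc_symm S T hS hT hZ) hY₀
      have huZY₀ : 0 < R.uvec S T Z Y₀ := (R.uvec_pos_iff S T Z Y₀).mpr hZY₀
      have hge : (R.uvec S T X Z - t * R.classVec S T X Z) * R.uvec S T Z Y₀
          ≤ ∑ Y, (R.uvec S T X Y - t * R.classVec S T X Y) * R.uvec S T Y Y₀ :=
        Finset.single_le_sum
          (fun Y _ => mul_nonneg (hw_nonneg Y) (R.uvec_nonneg S T Y Y₀))
          (Finset.mem_univ Z)
      rw [hweig Y₀, hwY₀, mul_zero] at hge
      exact absurd (lt_of_lt_of_le (mul_pos hpos huZY₀) hge) (lt_irrefl 0)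
    · rw [R.classVec_not S T X Z hZ, R.uvec_eq_zero S T hZ, mul_zero, sub_zero]
  have huv : ∀ Z, R.uvec S T X Z = t * R.classVec S T X Z := fun Z =>
    sub_eq_zero.mp (hwzero Z)
  have hvnn : ∀ c, 0 ≤ R.classVec S T X c := fun c => by
    unfold FusionRing.classVec
    split
    · exact (R.fp_pos _).le
    · exact le_refl 0
  have hA : 0 < ∑ c, R.classVec S T X c * R.fp c :=
    Finset.sum_pos' (fun c _ => mul_nonneg (hvnn c) (R.fp_pos c).le)
      ⟨X, Finset.mem_univ X, by
        rw [R.classVec_of S T X X hrefl]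
        exact mul_pos (R.fp_pos X) (R.fp_pos X)⟩
  have hphiu : ∑ c, R.uvec S T X c * R.fp c
      = R.fpdimS S * R.fp X * R.fpdimS T := R.phi_uvec S T X
  have hsum : ∑ c, R.uvec S T X c * R.fp c
      = t * ∑ c, R.classVec S T X c * R.fp c := by
    rw [Finset.mul_sum]
    exact Finset.sum_congr rfl fun c _ => by rw [huv c]; ring
  have hteq : t = R.fpdimS S * R.fp X * R.fpdimS T
      / ∑ c, R.classVec S T X c * R.fp c := by
    rw [eq_div_iff (ne_of_gt hA), ← hphiu]
    exact hsum.symm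
  show R.uvec S T X = _
  funext Z
  rw [Pi.smul_apply, smul_eq_mul, huv Z, hteq]
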